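/- arXiv:1910.06901 — 6 statements merged into one kernel-verified Lean document; each statement's English description precedes it below -/
import Mathlib

section
/- With ψ, Ω, K₂, M as above, assume additionally d₂ > 0, τ ∈ (0,1], L̂ ≥ 0, M² ≥ (L̂ + d₂(1−τ))/(2 d₂ τ), and let J ≥ 0 with ∫_ℝ J ≤ 1 and g(t) < h(t) − 1/M. Then for (t,x) ∈ Ω: ∂_t ψ − d₂[τ ∂²_{xx} ψ + (1−τ)(∫_{g(t)}^{h(t)} J(x−y) ψ(t,y) dy − ψ)] ≥ 2 d₂ τ K₂ M² − d₂(1−τ) K₂ ≥ L̂ K₂. -/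
open Set MeasureTheory

/-- the barrier `ψ(t,x) = K₂[2M(h(t)−x) − M²(h(t)−x)²]` is a
supersolution: on `Ω`, `∂_tψ − d₂[τ∂²_{xx}ψ + (1−τ)(∫_{g(t)}^{h(t)} J(x−y)ψ(t,y)dy − ψ)]
≥ 2d₂τK₂M² − d₂(1−τ)K₂ ≥ L̂K₂`, given `M² ≥ (L̂ + d₂(1−τ))/(2d₂τ)`. -/
theorem stmt_7 (K₂ M d₂ τ Lhat T₀ : ℝ) (J g h h' : ℝ → ℝ)
    (hK₂ : 0 < K₂) (hM : 0 < M) (hd₂ : 0 < d₂) (hτ : 0 < τ) (hτ1 : τ ≤ 1)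
    (hLhat : 0 ≤ Lhat)
    (hM2 : (Lhat + d₂ * (1 - τ)) / (2 * d₂ * τ) ≤ M ^ 2)
    (hJpos : ∀ x, 0 ≤ J x) (hJint : Integrable J) (hJ1 : ∫ x, J x ≤ 1)
    (hgh : ∀ t, g t < h t - 1 / M)
    (hh' : ∀ t, 0 < h' t)
    (hInt : ∀ t x, IntervalIntegrable
      (fun y => J (x - y) * (K₂ * (2 * M * (h t - y) - M ^ 2 * (h t - y) ^ 2)))
      volume (g t) (h t)) :
    ∀ t ∈ Ioc (0:ℝ) T₀, ∀ x ∈ Ioo (h t - 1 / M) (h t),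
      (2 * d₂ * τ * K₂ * M ^ 2 - d₂ * (1 - τ) * K₂
        ≤ 2 * K₂ * M * h' t * (1 - M * (h t - x))
          - d₂ * (τ * (-(2 * K₂ * M ^ 2))
            + (1 - τ) * ((∫ y in g t..h t,
                J (x - y) * (K₂ * (2 * M * (h t - y) - M ^ 2 * (h t - y) ^ 2)))
              - K₂ * (2 * M * (h t - x) - M ^ 2 * (h t - x) ^ 2)))) ∧
      Lhat * K₂ ≤ 2 * d₂ * τ * K₂ * M ^ 2 - d₂ * (1 - τ) * K₂ := by
  intro t ht x hx
  obtain ⟨hx1, hx2⟩ := hx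
  have hghle : g t ≤ h t := le_of_lt (lt_of_lt_of_le (hgh t)
    (by linarith [one_div_pos.mpr hM]))
  have hτ0 : (0:ℝ) ≤ 1 - τ := by linarith
  -- pointwise bound ψ ≤ K₂
  have hψle : ∀ y, K₂ * (2 * M * (h t - y) - M ^ 2 * (h t - y) ^ 2) ≤ K₂ := by
    intro y
    nlinarith [sq_nonneg (1 - M * (h t - y)), hK₂.le]
  -- ψ(t,x) ≥ 0 for x in the collar
  have hs1 : 0 < h t - x := by linarith
  have hs2 : M * (h t - x) < 1 := by
    have h1 := mul_lt_mul_of_pos_left (show h t - x < 1 / M by linarith) hM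
    have h2 : M * (1 / M) = 1 := by field_simp
    linarith
  have hψx : 0 ≤ K₂ * (2 * M * (h t - x) - M ^ 2 * (h t - x) ^ 2) := by
    have hp : 0 < M * (h t - x) := mul_pos hM hs1
    have key : M ^ 2 * (h t - x) ^ 2 = (M * (h t - x)) ^ 2 := by ring
    nlinarith [mul_nonneg hK₂.le (mul_nonneg hp.le (show (0:ℝ) ≤ 2 - M * (h t - x) by linarith))]
  -- integral bound
  have hJxint : Integrable (fun y => J (x - y)) := hJint.comp_sub_left x
  have hIbound : (∫ y in g t..h t,
      J (x - y) * (K₂ * (2 * M * (h t - y) - M ^ 2 * (h t - y) ^ 2))) ≤ K₂ := by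
    have h1 : (∫ y in g t..h t,
        J (x - y) * (K₂ * (2 * M * (h t - y) - M ^ 2 * (h t - y) ^ 2)))
        ≤ ∫ y in g t..h t, J (x - y) * K₂ := by
      apply intervalIntegral.integral_mono_on hghle (hInt t x)
        ((hJxint.mul_const K₂).intervalIntegrable)
      intro y _
      exact mul_le_mul_of_nonneg_left (hψle y) (hJpos _)
    have h2 : (∫ y in g t..h t, J (x - y) * K₂) = (∫ y in g t..h t, J (x - y)) * K₂ :=
      intervalIntegral.integral_mul_const _ _
    have h3 : (∫ y in g t..h t, J (x - y)) = ∫ u in x - h t..x - g t, J u :=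
      intervalIntegral.integral_comp_sub_left J x
    have h4 : (∫ u in x - h t..x - g t, J u) ≤ ∫ u, J u := by
      rw [intervalIntegral.integral_of_le (by linarith)]
      exact setIntegral_le_integral hJint (Filter.Eventually.of_forall hJpos)
    calc (∫ y in g t..h t,
        J (x - y) * (K₂ * (2 * M * (h t - y) - M ^ 2 * (h t - y) ^ 2)))
        ≤ (∫ y in g t..h t, J (x - y)) * K₂ := by rw [← h2]; exact h1
      _ ≤ 1 * K₂ := by
          apply mul_le_mul_of_nonneg_right _ hK₂.le
          rw [h3]; linarith
      _ = K₂ := one_mul K₂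
  constructor
  · have hA : 0 ≤ 2 * K₂ * M * h' t * (1 - M * (h t - x)) := by
      exact mul_nonneg (mul_nonneg (by positivity) (hh' t).le) (by linarith)
    nlinarith [mul_le_mul_of_nonneg_left (show (∫ y in g t..h t,
        J (x - y) * (K₂ * (2 * M * (h t - y) - M ^ 2 * (h t - y) ^ 2)))
        - K₂ * (2 * M * (h t - x) - M ^ 2 * (h t - x) ^ 2) ≤ K₂ by linarith) hτ0,
      mul_pos hd₂ (sub_pos.mpr hs2)]
  · have h2dτ : 0 < 2 * d₂ * τ := by positivity
    have := (div_le_iff₀ h2dτ).mp hM2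
    nlinarith
end

section
/- Let J : ℝ → ℝ be L-Lipschitz, nonnegative, and bounded. Let g, h ∈ C^{α/2}([0,T₀]) with h(t) − g(t) bounded, and let ṽ ∈ C^{α/2, α}([0,T₀] × [−1,1]) be bounded, for some α ∈ (0,1). Then the function F(t,z) := ((h(t)−g(t))/2) ∫_{−1}^{1} J( ((h(t)−g(t))/2)(z − s) ) ṽ(t,s) ds satisfies |F(t₁,z₁) − F(t₂,z₂)| ≤ C(|z₁ − z₂|^α + |t₁ − t₂|^{α/2}) for some constant C depending only on L, sup J, the bounds on g, h, ṽ and their Hölder norms; that is, F ∈ C^{α/2, α}([0,T₀] × [−1,1]). -/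
open Set

lemma contOn_of_holder {f : ℝ → ℝ} {C a : ℝ} (ha : 0 < a) {s : Set ℝ}
    (h : ∀ x ∈ s, ∀ y ∈ s, |f x - f y| ≤ C * |x - y| ^ a) :
    ContinuousOn f s := by
  intro x hx
  rw [ContinuousWithinAt, tendsto_iff_dist_tendsto_zero]
  have hc : ContinuousAt (fun y : ℝ => max C 0 * |y - x| ^ a) x := by
    apply ContinuousAt.mul continuousAt_const
    exact (Real.continuousAt_rpow_const _ a (Or.inr ha.le)).comp
      ((continuous_id.sub continuous_const).abs.continuousAt)
  have hval : max C 0 * |x - x| ^ a = 0 := by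
    simp [Real.zero_rpow ha.ne']
  have key : Filter.Tendsto (fun y => max C 0 * |y - x| ^ a) (nhdsWithin x s) (nhds 0) := by
    have := hc.tendsto
    rw [hval] at this
    exact this.mono_left nhdsWithin_le_nhds
  refine squeeze_zero' (Filter.Eventually.of_forall fun y => dist_nonneg) ?_ key
  refine Filter.eventually_of_mem self_mem_nhdsWithin fun y hy => ?_
  calc dist (f y) (f x) = |f y - f x| := Real.dist_eq _ _
    _ ≤ C * |y - x| ^ a := h y hy x hx
    _ ≤ max C 0 * |y - x| ^ a := by
        apply mul_le_mul_of_nonneg_right (le_max_left _ _)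
        positivity

lemma le_two_rpow {x α : ℝ} (hx : 0 ≤ x) (hx2 : x ≤ 2) (h0 : 0 < α) (h1 : α ≤ 1) :
    x ≤ 2 ^ (1 - α) * x ^ α := by
  rcases eq_or_lt_of_le hx with h | h
  · simp [← h, Real.zero_rpow h0.ne']
  · have e : x = x ^ (1 - α) * x ^ α := by
      rw [← Real.rpow_add h]; norm_num
    have hb : x ^ (1 - α) ≤ 2 ^ (1 - α) := Real.rpow_le_rpow hx hx2 (by linarith)
    nlinarith [Real.rpow_nonneg hx α]

set_option maxHeartbeats 1600000 in
/-- Hölder regularity (estimate (2.12)) of the rescaled nonlocal term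
`F(t,z) = ((h(t)−g(t))/2) ∫_{−1}^1 J(((h(t)−g(t))/2)(z−s)) ṽ(t,s) ds`:
there is a constant `C` with
`|F(t₁,z₁) − F(t₂,z₂)| ≤ C(|z₁−z₂|^α + |t₁−t₂|^{α/2})`. -/
theorem stmt_9 (T₀ α L B Bv Cg Ch Cv Mb : ℝ) (J : ℝ → ℝ) (g h : ℝ → ℝ)
    (v : ℝ → ℝ → ℝ)
    (hT₀ : 0 < T₀) (hα : α ∈ Ioo (0:ℝ) 1) (hL : 0 ≤ L)
    (hJlip : ∀ x y, |J x - J y| ≤ L * |x - y|)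
    (hJpos : ∀ x, 0 ≤ J x) (hJbd : ∀ x, J x ≤ B)
    (hgh : ∀ t ∈ Icc (0:ℝ) T₀, g t < h t)
    (hbd : ∀ t ∈ Icc (0:ℝ) T₀, |g t| ≤ Mb ∧ |h t| ≤ Mb)
    (hgH : ∀ t₁ ∈ Icc (0:ℝ) T₀, ∀ t₂ ∈ Icc (0:ℝ) T₀,
      |g t₁ - g t₂| ≤ Cg * |t₁ - t₂| ^ (α / 2))
    (hhH : ∀ t₁ ∈ Icc (0:ℝ) T₀, ∀ t₂ ∈ Icc (0:ℝ) T₀,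
      |h t₁ - h t₂| ≤ Ch * |t₁ - t₂| ^ (α / 2))
    (hvbd : ∀ t ∈ Icc (0:ℝ) T₀, ∀ z ∈ Icc (-1:ℝ) 1, |v t z| ≤ Bv)
    (hvH : ∀ t₁ ∈ Icc (0:ℝ) T₀, ∀ t₂ ∈ Icc (0:ℝ) T₀,
      ∀ z₁ ∈ Icc (-1:ℝ) 1, ∀ z₂ ∈ Icc (-1:ℝ) 1,
      |v t₁ z₁ - v t₂ z₂| ≤ Cv * (|z₁ - z₂| ^ α + |t₁ - t₂| ^ (α / 2))) :
    ∃ C : ℝ, 0 ≤ C ∧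
      ∀ t₁ ∈ Icc (0:ℝ) T₀, ∀ t₂ ∈ Icc (0:ℝ) T₀,
      ∀ z₁ ∈ Icc (-1:ℝ) 1, ∀ z₂ ∈ Icc (-1:ℝ) 1,
      |(((h t₁ - g t₁) / 2) * ∫ s in (-1:ℝ)..1,
          J (((h t₁ - g t₁) / 2) * (z₁ - s)) * v t₁ s)
        - ((h t₂ - g t₂) / 2) * ∫ s in (-1:ℝ)..1,
          J (((h t₂ - g t₂) / 2) * (z₂ - s)) * v t₂ s|
        ≤ C * (|z₁ - z₂| ^ α + |t₁ - t₂| ^ (α / 2)) := by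
  obtain ⟨hα0, hα1⟩ := hα
  have h0T : (0:ℝ) ∈ Icc (0:ℝ) T₀ := ⟨le_refl _, hT₀.le⟩
  have hTT : T₀ ∈ Icc (0:ℝ) T₀ := ⟨hT₀.le, le_refl _⟩
  have hz0 : (0:ℝ) ∈ Icc (-1:ℝ) 1 := by norm_num
  have hz1' : (1:ℝ) ∈ Icc (-1:ℝ) 1 := by norm_num
  have hzm1 : (-1:ℝ) ∈ Icc (-1:ℝ) 1 := by norm_num
  have hB : 0 ≤ B := (hJpos 0).trans (hJbd 0)
  have hBv : 0 ≤ Bv := (abs_nonneg _).trans (hvbd 0 h0T 0 hz0)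
  have hMb : 0 ≤ Mb := (abs_nonneg _).trans (hbd 0 h0T).1
  have hT2 : (0:ℝ) < T₀ ^ (α/2) := Real.rpow_pos_of_pos hT₀ _
  have hCg : 0 ≤ Cg := by
    have h' := hgH 0 h0T T₀ hTT
    rw [zero_sub, abs_neg, abs_of_pos hT₀] at h'
    nlinarith [abs_nonneg (g 0 - g T₀)]
  have hCh : 0 ≤ Ch := by
    have h' := hhH 0 h0T T₀ hTT
    rw [zero_sub, abs_neg, abs_of_pos hT₀] at h'
    nlinarith [abs_nonneg (h 0 - h T₀)]
  have h2a : (0:ℝ) < (2:ℝ) ^ α := Real.rpow_pos_of_pos (by norm_num) _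
  have hCv : 0 ≤ Cv := by
    have h' := hvH 0 h0T 0 h0T 1 hz1' (-1) hzm1
    have e1 : |(0:ℝ) - 0| ^ (α/2) = 0 := by
      simp [Real.zero_rpow (show α/2 ≠ 0 by positivity)]
    have e2 : |(1:ℝ) - (-1)| = 2 := by norm_num
    rw [e1, e2] at h'
    nlinarith [abs_nonneg (v 0 1 - v 0 (-1))]
  have hJcont : Continuous J := by
    have hlw : LipschitzWith (Real.toNNReal L) J := by
      rw [lipschitzWith_iff_dist_le_mul]
      intro x y
      rw [Real.dist_eq, Real.dist_eq, Real.coe_toNNReal L hL]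
      exact hJlip x y
    exact hlw.continuous
  have hdbd : ∀ t ∈ Icc (0:ℝ) T₀, |(h t - g t)/2| ≤ Mb := by
    intro t ht
    have h1 := abs_le.mp (hbd t ht).1
    have h2 := abs_le.mp (hbd t ht).2
    rw [abs_le]
    constructor <;> [linarith [h1.1, h2.2]; linarith [h1.2, h2.1]] <;> skip
  have hK : 0 ≤ (Cg + Ch)/2 := by linarith
  have hP : (0:ℝ) ≤ (2:ℝ) ^ (1 - α) := by positivity
  refine ⟨2*B*Bv*((Cg+Ch)/2) + 4*Mb*L*Bv*((Cg+Ch)/2) + 2*Mb*B*Cv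
      + 2*Mb^2*L*Bv*((2:ℝ)^(1-α)), ?_, ?_⟩
  · nlinarith [mul_nonneg (mul_nonneg hB hBv) hK,
      mul_nonneg (mul_nonneg (mul_nonneg hMb hL) hBv) hK,
      mul_nonneg (mul_nonneg hMb hB) hCv,
      mul_nonneg (mul_nonneg (mul_nonneg (mul_nonneg hMb hMb) hL) hBv) hP]
  intro t₁ ht₁ t₂ ht₂ z₁ hz₁ z₂ hz₂
  set d₁ := (h t₁ - g t₁)/2 with hd₁def
  set d₂ := (h t₂ - g t₂)/2 with hd₂def
  set τ := |t₁ - t₂| ^ (α/2) with hτdef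
  set σ := |z₁ - z₂| ^ α with hσdef
  have hτ0 : 0 ≤ τ := Real.rpow_nonneg (abs_nonneg _) _
  have hσ0 : 0 ≤ σ := Real.rpow_nonneg (abs_nonneg _) _
  have hvcont : ∀ t ∈ Icc (0:ℝ) T₀, ContinuousOn (v t) (Icc (-1:ℝ) 1) := by
    intro t ht
    apply contOn_of_holder hα0 (C := Cv)
    intro x hx y hy
    have h' := hvH t ht t ht x hx y hy
    simpa [Real.zero_rpow (show α/2 ≠ 0 by positivity)] using h'
  have hint : ∀ t ∈ Icc (0:ℝ) T₀, ∀ d z : ℝ,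
      IntervalIntegrable (fun s => J (d*(z-s)) * v t s) MeasureTheory.volume (-1) 1 := by
    intro t ht d z
    apply ContinuousOn.intervalIntegrable
    rw [uIcc_of_le (by norm_num : (-1:ℝ) ≤ 1)]
    exact ((hJcont.comp (by fun_prop)).continuousOn).mul (hvcont t ht)
  have hsub : ∀ s ∈ uIoc (-1:ℝ) 1, s ∈ Icc (-1:ℝ) 1 := by
    intro s hs
    rw [uIoc_of_le (by norm_num : (-1:ℝ) ≤ 1)] at hs
    exact Ioc_subset_Icc_self hs
  have hIbd : |∫ s in (-1:ℝ)..1, J (d₁*(z₁-s)) * v t₁ s| ≤ B*Bv*2 := by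
    have h' := intervalIntegral.norm_integral_le_of_norm_le_const
      (C := B*Bv) (f := fun s => J (d₁*(z₁-s)) * v t₁ s) (a := -1) (b := 1) ?_
    · rw [Real.norm_eq_abs] at h'
      calc |∫ s in (-1:ℝ)..1, J (d₁*(z₁-s)) * v t₁ s| ≤ B*Bv * |1 - (-1:ℝ)| := h'
        _ = B*Bv*2 := by norm_num
    · intro s hs
      have hs' := hsub s hs
      rw [Real.norm_eq_abs, abs_mul, abs_of_nonneg (hJpos _)]
      exact mul_le_mul (hJbd _) (hvbd t₁ ht₁ s hs') (abs_nonneg _) hB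
  have hKd : |d₁ - d₂| ≤ ((Cg+Ch)/2) * τ := by
    have h1 := hgH t₁ ht₁ t₂ ht₂
    have h2 := hhH t₁ ht₁ t₂ ht₂
    have e : d₁ - d₂ = ((h t₁ - h t₂) - (g t₁ - g t₂))/2 := by
      rw [hd₁def, hd₂def]; ring
    have h3 : |(h t₁ - h t₂) - (g t₁ - g t₂)| ≤ |h t₁ - h t₂| + |g t₁ - g t₂| :=
      abs_sub _ _
    rw [e, abs_div, abs_two]
    linarith
  have hz2 : |z₁ - z₂| ≤ 2 := by
    rw [abs_le]; constructor <;> [linarith [hz₁.1, hz₂.2]; linarith [hz₁.2, hz₂.1]]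
  have hz12 : |z₁ - z₂| ≤ 2^(1-α) * σ :=
    le_two_rpow (abs_nonneg _) hz2 hα0 hα1.le
  set E := L*Bv*(2*(((Cg+Ch)/2)*τ) + Mb*(2^(1-α)*σ)) + B*(Cv*τ) with hEdef
  have hpt : ∀ s ∈ Icc (-1:ℝ) 1,
      |J (d₁*(z₁-s)) * v t₁ s - J (d₂*(z₂-s)) * v t₂ s| ≤ E := by
    intro s hs
    have hv1 : |v t₁ s| ≤ Bv := hvbd t₁ ht₁ s hs
    have hvd : |v t₁ s - v t₂ s| ≤ Cv * τ := by
      have h' := hvH t₁ ht₁ t₂ ht₂ s hs s hs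
      simpa [Real.zero_rpow (ne_of_gt hα0)] using h'
    have hJd : |J (d₁*(z₁-s)) - J (d₂*(z₂-s))| ≤ L * (2*|d₁-d₂| + Mb*|z₁-z₂|) := by
      have h1 := hJlip (d₁*(z₁-s)) (d₂*(z₂-s))
      have h2 : |d₁*(z₁-s) - d₂*(z₂-s)| ≤ 2*|d₁-d₂| + Mb*|z₁-z₂| := by
        have e : d₁*(z₁-s) - d₂*(z₂-s) = (d₁-d₂)*(z₁-s) + d₂*(z₁-z₂) := by ring
        have ha : |(d₁-d₂)*(z₁-s) + d₂*(z₁-z₂)| ≤ |d₁-d₂| * |z₁-s| + |d₂| * |z₁-z₂| := by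
          calc |(d₁-d₂)*(z₁-s) + d₂*(z₁-z₂)|
              ≤ |(d₁-d₂)*(z₁-s)| + |d₂*(z₁-z₂)| := abs_add_le _ _
            _ = |d₁-d₂| * |z₁-s| + |d₂| * |z₁-z₂| := by rw [abs_mul, abs_mul]
        have hzs : |z₁ - s| ≤ 2 := by
          rw [abs_le]; constructor <;> [linarith [hz₁.1, hs.2]; linarith [hz₁.2, hs.1]]
        have hd2 : |d₂| ≤ Mb := hdbd t₂ ht₂
        rw [e]
        nlinarith [abs_nonneg (d₁ - d₂), abs_nonneg (z₁ - z₂), abs_nonneg (z₁ - s),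
          abs_nonneg d₂]
      calc |J (d₁*(z₁-s)) - J (d₂*(z₂-s))| ≤ L * |d₁*(z₁-s) - d₂*(z₂-s)| := h1
        _ ≤ L * (2*|d₁-d₂| + Mb*|z₁-z₂|) := mul_le_mul_of_nonneg_left h2 hL
    have hJ2 : |J (d₂*(z₂-s))| ≤ B := by
      rw [abs_of_nonneg (hJpos _)]; exact hJbd _
    have e2 : J (d₁*(z₁-s)) * v t₁ s - J (d₂*(z₂-s)) * v t₂ s
        = (J (d₁*(z₁-s)) - J (d₂*(z₂-s))) * v t₁ s
          + J (d₂*(z₂-s)) * (v t₁ s - v t₂ s) := by ring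
    rw [e2]
    calc |(J (d₁*(z₁-s)) - J (d₂*(z₂-s))) * v t₁ s
          + J (d₂*(z₂-s)) * (v t₁ s - v t₂ s)|
        ≤ |(J (d₁*(z₁-s)) - J (d₂*(z₂-s)))| * |v t₁ s|
          + |J (d₂*(z₂-s))| * |v t₁ s - v t₂ s| := by
          refine (abs_add_le _ _).trans ?_
          rw [abs_mul, abs_mul]
      _ ≤ (L * (2*|d₁-d₂| + Mb*|z₁-z₂|)) * Bv + B * (Cv * τ) := by
          refine add_le_add (mul_le_mul hJd hv1 (abs_nonneg _) ?_)
            (mul_le_mul hJ2 hvd (abs_nonneg _) hB)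
          positivity
      _ ≤ E := by
          rw [hEdef]
          nlinarith [mul_nonneg (mul_nonneg hL hBv) (sub_nonneg.2 hKd),
            mul_nonneg (mul_nonneg (mul_nonneg hL hBv) hMb) (sub_nonneg.2 hz12)]
  have hidiff : |(∫ s in (-1:ℝ)..1, J (d₁*(z₁-s)) * v t₁ s)
      - ∫ s in (-1:ℝ)..1, J (d₂*(z₂-s)) * v t₂ s| ≤ E * 2 := by
    rw [← intervalIntegral.integral_sub (hint t₁ ht₁ d₁ z₁) (hint t₂ ht₂ d₂ z₂)]
    have h' := intervalIntegral.norm_integral_le_of_norm_le_const (C := E)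
      (f := fun s => J (d₁*(z₁-s)) * v t₁ s - J (d₂*(z₂-s)) * v t₂ s) (a := -1) (b := 1)
      (fun s hs => by rw [Real.norm_eq_abs]; exact hpt s (hsub s hs))
    rw [Real.norm_eq_abs] at h'
    calc |∫ s in (-1:ℝ)..1, (J (d₁*(z₁-s)) * v t₁ s - J (d₂*(z₂-s)) * v t₂ s)|
        ≤ E * |1 - (-1:ℝ)| := h'
      _ = E * 2 := by norm_num
  have hd2' : |d₂| ≤ Mb := hdbd t₂ ht₂
  set I₁ := ∫ s in (-1:ℝ)..1, J (d₁*(z₁-s)) * v t₁ s with hI₁def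
  set I₂ := ∫ s in (-1:ℝ)..1, J (d₂*(z₂-s)) * v t₂ s with hI₂def
  have hsplit : |d₁ * I₁ - d₂ * I₂| ≤ |d₁ - d₂| * |I₁| + |d₂| * |I₁ - I₂| := by
    have e : d₁ * I₁ - d₂ * I₂ = (d₁ - d₂) * I₁ + d₂ * (I₁ - I₂) := by ring
    rw [e]
    calc |(d₁ - d₂) * I₁ + d₂ * (I₁ - I₂)| ≤ |(d₁-d₂) * I₁| + |d₂ * (I₁-I₂)| := abs_add_le _ _
      _ = |d₁ - d₂| * |I₁| + |d₂| * |I₁ - I₂| := by rw [abs_mul, abs_mul]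
  have h1 : |d₁ - d₂| * |I₁| ≤ (((Cg+Ch)/2)*τ) * (B*Bv*2) :=
    mul_le_mul hKd hIbd (abs_nonneg _) (by positivity)
  have h2 : |d₂| * |I₁ - I₂| ≤ Mb * (E*2) :=
    mul_le_mul hd2' hidiff (abs_nonneg _) hMb
  have hfin : |d₁ * I₁ - d₂ * I₂| ≤ (((Cg+Ch)/2)*τ) * (B*Bv*2) + Mb * (E*2) :=
    hsplit.trans (add_le_add h1 h2)
  refine hfin.trans ?_
  rw [hEdef]
  nlinarith [mul_nonneg (mul_nonneg (mul_nonneg hB hBv) hK) hσ0,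
    mul_nonneg (mul_nonneg (mul_nonneg (mul_nonneg hMb hL) hBv) hK) hσ0,
    mul_nonneg (mul_nonneg (mul_nonneg hMb hB) hCv) hσ0,
    mul_nonneg (mul_nonneg (mul_nonneg (mul_nonneg (mul_nonneg hMb hMb) hL) hBv) hP) hτ0]
end

section
/- Let d₂, τ > 0, c ∈ L^∞, and let ω : [t₀, T₀] × cl(Ω_t) → ℝ be a C^{1,2} function on a space-time region with moving spatial interval Ω_t = (g(t), h(t)). Suppose ω satisfies ∂_t ω ≥ d₂[τ ∂²_x ω + (1−τ) ∫_{g(t)}^{h(t)} J(x−y) ω(t,y) dy] + c̃(t,x) ω with c̃ := −k − d₂(1−τ) + c < 0 everywhere, ω ≥ 0 on the parabolic boundary (at t = 0 and at x = g(t), x = h(t)), and J ≥ 0 with ∫_ℝ J = 1. If ω attains a negative interior minimum at (t₊, x₊), then a contradiction arises: at (t₊, x₊) one has ∂_t ω ≤ 0, ∂²_x ω ≥ 0, ∫ J(x₊ − y) ω(t₊, y) dy ≥ ω(t₊,x₊), and hence 0 ≥ ∂_t ω ≥ d₂ τ ∂²_x ω + (−k + c(t₊,x₊)) ω(t₊,x₊)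 > 0. Consequently ω ≥ 0 on the whole closed region. -/
/-!
Take a minimum point `(t, x)` of `ω` on the compact closed region and suppose `ω(t, x) < 0`.
The boundary data force `(t, x)` off the parabolic boundary, so there `∂ₜω ≤ 0` (a one-sided
minimum in time) and `∂²ₓω ≥ 0`. Since `J ≥ 0` has total mass one and `ω(t, x) < 0`, the nonlocal
term is at least `ω(t, x)`, so the `-d₂(1-τ)ω` part of the zeroth-order coefficient absorbs it, and
the left side of the differential inequality is bounded below by `(-k + c) ω(t, x) > 0`,
contradicting `∂ₜω ≤ 0`.
-/

open Set MeasureTheory Filter Topology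

theorem IsCompact.setOf_mem_Icc {α : Type*} [TopologicalSpace α] [T2Space α] {s : Set α}
    {g h : α → ℝ} (hs : IsCompact s) (hg : ContinuousOn g s) (hh : ContinuousOn h s) :
    IsCompact {p : α × ℝ | p.1 ∈ s ∧ p.2 ∈ Icc (g p.1) (h p.1)} := by
  obtain ⟨lo, hlo⟩ := hs.bddBelow_image hg
  obtain ⟨hi, hhi⟩ := hs.bddAbove_image hh
  have hS : IsClosed (s ×ˢ (univ : Set ℝ)) := hs.isClosed.prod isClosed_univ
  have hclosed : IsClosed ({p ∈ s ×ˢ univ | g p.1 ≤ p.2} ∩ {p ∈ s ×ˢ univ | p.2 ≤ h p.1}) :=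
    (hS.isClosed_le (hg.comp continuousOn_fst fun _ hp => hp.1) continuousOn_snd).inter
      (hS.isClosed_le continuousOn_snd (hh.comp continuousOn_fst fun _ hp => hp.1))
  refine (hs.prod (isCompact_Icc (a := lo) (b := hi))).of_isClosed_subset ?_ ?_
  · convert hclosed using 1
    ext p
    simp only [mem_ofPred_eq, mem_Icc, mem_inter_iff, mem_prod, mem_univ, and_true]
    tauto
  · rintro p ⟨hp, hgp, hhp⟩
    exact ⟨hp, (hlo ⟨p.1, hp, rfl⟩).trans hgp, hhp.trans (hhi ⟨p.1, hp, rfl⟩)⟩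

theorem IsLocalMinOn.hasDerivAt_nonpos {f : ℝ → ℝ} {f' a : ℝ} (hmin : IsLocalMinOn f (Iic a) a)
    (hf : HasDerivAt f f' a) : f' ≤ 0 := by
  have hdir : (-1 : ℝ) ∈ posTangentConeAt (Iic a) a := by
    have hseg : segment ℝ a (a - 1) ⊆ Iic a :=
      (convex_Iic a).segment_subset (mem_Iic.2 le_rfl) (by simp)
    simpa using sub_mem_posTangentConeAt_of_segment_subset hseg
  have := hmin.hasFDerivWithinAt_nonneg hf.hasFDerivAt.hasFDerivWithinAt hdir
  simp only [ContinuousLinearMap.toSpanSingleton_apply, smul_eq_mul, neg_mul, one_mul] at this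
  linarith

theorem IsLocalMin.secondDeriv_nonneg {f f' : ℝ → ℝ} {x L : ℝ} (hmin : IsLocalMin f x)
    (hf : ∀ᶠ y in 𝓝 x, HasDerivAt f (f' y) y) (hf' : HasDerivAt f' L x) : 0 ≤ L := by
  by_contra! hL
  have hderiv : deriv f =ᶠ[𝓝 x] f' := hf.mono fun y hy => hy.deriv
  -- If `L < 0`, Mathlib's second-derivative test makes `x` also a local maximum, so `f` is
  -- locally constant and `f'` vanishes near `x`, forcing `L = 0`.
  have hmax : IsLocalMax f x :=
    isLocalMax_of_deriv_deriv_neg (by rwa [(hf'.congr_of_eventuallyEq hderiv).deriv])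
      (by rw [hderiv.eq_of_nhds]; exact hmin.hasDerivAt_eq_zero hf.self_of_nhds)
      hf.self_of_nhds.continuousAt
  have hconst : f =ᶠ[𝓝 x] fun _ => f x := (hmax.and hmin).mono fun y hy => le_antisymm hy.1 hy.2
  have hzero : f' =ᶠ[𝓝 x] fun _ => 0 := by
    filter_upwards [hf, hconst.eventuallyEq_nhds] with y hy hyc
    exact hy.unique ((hasDerivAt_const y (f x)).congr_of_eventuallyEq hyc)
  have := (hf'.congr_of_eventuallyEq hzero.symm).unique (hasDerivAt_const x 0)
  linarith

theorem le_intervalIntegral_kernel_mul {J f : ℝ → ℝ} {a b x m : ℝ} (hab : a ≤ b)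
    (hJ : ∀ y, 0 ≤ J y) (hJint : Integrable J) (hJ1 : ∫ y, J y = 1)
    (hf : ContinuousOn f (Icc a b)) (hm : m ≤ 0) (hmf : ∀ y ∈ Icc a b, m ≤ f y) :
    m ≤ ∫ y in a..b, J (x - y) * f y := by
  have hJx : Integrable fun y => J (x - y) := hJint.comp_sub_left x
  have hmass : ∫ y in a..b, J (x - y) ≤ 1 := by
    rw [intervalIntegral.integral_of_le hab, ← hJ1, ← integral_sub_left_eq_self J volume x]
    exact setIntegral_le_integral hJx (Eventually.of_forall fun y => hJ _)
  have hint : IntervalIntegrable (fun y => J (x - y) * f y) volume a b :=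
    (intervalIntegrable_iff_integrableOn_Icc_of_le hab).2
      (hJx.integrableOn.mul_continuousOn hf isCompact_Icc)
  calc m ≤ (∫ y in a..b, J (x - y)) * m := by nlinarith
    _ = ∫ y in a..b, J (x - y) * m := (intervalIntegral.integral_mul_const m _).symm
    _ ≤ ∫ y in a..b, J (x - y) * f y :=
      intervalIntegral.integral_mono_on hab (hJx.mul_const m).intervalIntegrable hint
        fun y hy => mul_le_mul_of_nonneg_left (hmf y hy) (hJ _)

theorem stmt_12_general (T₀ d₂ τ k : ℝ) (J : ℝ → ℝ) (g h : ℝ → ℝ)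
    (ω ωt ωx ωxx : ℝ → ℝ → ℝ) (c : ℝ → ℝ → ℝ)
    (hd₂ : 0 < d₂) (hτ : 0 < τ) (hτ1 : τ ≤ 1)
    (hJpos : ∀ x, 0 ≤ J x) (hJint : Integrable J) (hJ1 : ∫ x, J x = 1)
    (hg : ContinuousOn g (Icc 0 T₀)) (hh : ContinuousOn h (Icc 0 T₀))
    (hωcont : ContinuousOn (fun p : ℝ × ℝ => ω p.1 p.2)
      {p : ℝ × ℝ | p.1 ∈ Icc 0 T₀ ∧ p.2 ∈ Icc (g p.1) (h p.1)})
    (hdt : ∀ t ∈ Ioc (0:ℝ) T₀, ∀ x ∈ Ioo (g t) (h t),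
      HasDerivAt (fun s => ω s x) (ωt t x) t)
    (hdx : ∀ t ∈ Ioc (0:ℝ) T₀, ∀ x ∈ Ioo (g t) (h t),
      HasDerivAt (fun y => ω t y) (ωx t x) x)
    (hdxx : ∀ t ∈ Ioc (0:ℝ) T₀, ∀ x ∈ Ioo (g t) (h t),
      HasDerivAt (fun y => ωx t y) (ωxx t x) x)
    (hpde : ∀ t ∈ Ioc (0:ℝ) T₀, ∀ x ∈ Ioo (g t) (h t),
      d₂ * (τ * ωxx t x + (1 - τ) * ∫ y in g t..h t, J (x - y) * ω t y)
        + (-k - d₂ * (1 - τ) + c t x) * ω t x ≤ ωt t x)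
    (hkc : ∀ t ∈ Ioc (0:ℝ) T₀, ∀ x ∈ Ioo (g t) (h t), -k + c t x < 0)
    (hinit : ∀ x ∈ Icc (g 0) (h 0), 0 ≤ ω 0 x)
    (hbdry : ∀ t ∈ Icc (0:ℝ) T₀, 0 ≤ ω t (g t) ∧ 0 ≤ ω t (h t)) :
    ∀ t ∈ Icc (0:ℝ) T₀, ∀ x ∈ Icc (g t) (h t), 0 ≤ ω t x := by
  intro t₁ ht₁ x₁ hx₁
  by_contra! hneg
  obtain ⟨⟨t, x⟩, ⟨ht : t ∈ Icc 0 T₀, hx : x ∈ Icc (g t) (h t)⟩, hmin⟩ :=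
    (isCompact_Icc.setOf_mem_Icc hg hh).exists_isMinOn ⟨(t₁, x₁), ht₁, hx₁⟩ hωcont
  replace hmin : ∀ s ∈ Icc 0 T₀, ∀ y ∈ Icc (g s) (h s), ω t x ≤ ω s y :=
    fun s hs y hy => hmin (a := (s, y)) ⟨hs, hy⟩
  have hm : ω t x < 0 := (hmin t₁ ht₁ x₁ hx₁).trans_lt hneg
  have ht' : t ∈ Ioc 0 T₀ := ⟨ht.1.lt_of_ne (by rintro rfl; linarith [hinit x hx]), ht.2⟩
  have hx' : x ∈ Ioo (g t) (h t) :=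
    ⟨hx.1.lt_of_ne (by rintro rfl; linarith [(hbdry t ht).1]),
      hx.2.lt_of_ne (by rintro rfl; linarith [(hbdry t ht).2])⟩
  have hnear : ∀ᶠ y in 𝓝 x, y ∈ Ioo (g t) (h t) := Ioo_mem_nhds hx'.1 hx'.2
  have hxx : 0 ≤ ωxx t x :=
    IsLocalMin.secondDeriv_nonneg (hnear.mono fun y hy => hmin t ht y (Ioo_subset_Icc_self hy))
      (hnear.mono fun y hy => hdx t ht' y hy) (hdxx t ht' x hx')
  have hωt : ωt t x ≤ 0 := by
    refine IsLocalMinOn.hasDerivAt_nonpos ?_ (hdt t ht' x hx')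
    have hle : 𝓝[Iic t] t ≤ 𝓝[Icc 0 T₀] t :=
      (nhdsWithin_Icc_eq_nhdsLE ht'.1).symm.le.trans (nhdsWithin_mono _ (Icc_subset_Icc_right ht.2))
    filter_upwards [hle ((hg t ht).eventually_lt_const hx'.1),
      hle ((hh t ht).eventually_const_lt hx'.2), hle self_mem_nhdsWithin] with s hgs hhs hs
    exact hmin s hs x ⟨hgs.le, hhs.le⟩
  have hI : ω t x ≤ ∫ y in g t..h t, J (x - y) * ω t y :=
    le_intervalIntegral_kernel_mul (hx.1.trans hx.2) hJpos hJint hJ1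
      (hωcont.comp (Continuous.prodMk_right t).continuousOn fun y hy => ⟨ht, hy⟩) hm.le
      (hmin t ht)
  have := hpde t ht' x hx'
  linarith [mul_nonneg (mul_nonneg hd₂.le hτ.le) hxx,
    mul_nonneg (mul_nonneg hd₂.le (sub_nonneg.2 hτ1)) (sub_nonneg.2 hI),
    mul_pos_of_neg_of_neg (hkc t ht' x hx') hm]

/-- maximum principle for mixed local–nonlocal parabolic operators,
Lemma 2.1(i): if `ω` satisfies
`∂_t ω ≥ d₂[τ∂²_xω + (1−τ)∫_{g(t)}^{h(t)} J(x−y)ω(t,y)dy] + (−k − d₂(1−τ) + c)ω`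
in the moving region with `−k + c < 0` (hence `c̃ = −k − d₂(1−τ) + c < 0`), and
`ω ≥ 0` on the parabolic boundary, then `ω ≥ 0` on the whole closed region. -/
theorem stmt_12 (T₀ d₂ τ k : ℝ) (J : ℝ → ℝ) (g h : ℝ → ℝ)
    (ω ωt ωx ωxx : ℝ → ℝ → ℝ) (c : ℝ → ℝ → ℝ)
    (hT₀ : 0 < T₀) (hd₂ : 0 < d₂) (hτ : 0 < τ) (hτ1 : τ ≤ 1)
    (hJpos : ∀ x, 0 ≤ J x) (hJint : Integrable J) (hJ1 : ∫ x, J x = 1)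
    (hg : ContinuousOn g (Icc 0 T₀)) (hh : ContinuousOn h (Icc 0 T₀))
    (hgh : ∀ t ∈ Icc (0:ℝ) T₀, g t < h t)
    (hωcont : ContinuousOn (fun p : ℝ × ℝ => ω p.1 p.2)
      {p : ℝ × ℝ | p.1 ∈ Icc 0 T₀ ∧ p.2 ∈ Icc (g p.1) (h p.1)})
    (hdt : ∀ t ∈ Ioc (0:ℝ) T₀, ∀ x ∈ Ioo (g t) (h t),
      HasDerivAt (fun s => ω s x) (ωt t x) t)
    (hdx : ∀ t ∈ Ioc (0:ℝ) T₀, ∀ x ∈ Ioo (g t) (h t),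
      HasDerivAt (fun y => ω t y) (ωx t x) x)
    (hdxx : ∀ t ∈ Ioc (0:ℝ) T₀, ∀ x ∈ Ioo (g t) (h t),
      HasDerivAt (fun y => ωx t y) (ωxx t x) x)
    (hpde : ∀ t ∈ Ioc (0:ℝ) T₀, ∀ x ∈ Ioo (g t) (h t),
      d₂ * (τ * ωxx t x + (1 - τ) * ∫ y in g t..h t, J (x - y) * ω t y)
        + (-k - d₂ * (1 - τ) + c t x) * ω t x ≤ ωt t x)
    (hkc : ∀ t ∈ Ioc (0:ℝ) T₀, ∀ x ∈ Ioo (g t) (h t), -k + c t x < 0)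
    (hctilde : ∀ t ∈ Ioc (0:ℝ) T₀, ∀ x ∈ Ioo (g t) (h t),
      -k - d₂ * (1 - τ) + c t x < 0)
    (hinit : ∀ x ∈ Icc (g 0) (h 0), 0 ≤ ω 0 x)
    (hbdry : ∀ t ∈ Icc (0:ℝ) T₀, 0 ≤ ω t (g t) ∧ 0 ≤ ω t (h t)) :
    ∀ t ∈ Icc (0:ℝ) T₀, ∀ x ∈ Icc (g t) (h t), 0 ≤ ω t x :=
  stmt_12_general T₀ d₂ τ k J g h ω ωt ωx ωxx c hd₂ hτ hτ1 hJpos hJint hJ1 hg hh hωcont hdt hdx hdxx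
    hpde hkc hinit hbdry
end

section
/- Let a : ℝ → ℝ be continuous and T-periodic, a_T its average, and suppose λ and φ : ℝ × cl(Ω) → (0,∞) (T-periodic in t, C¹ in t) satisfy ∂_t φ − d₁[∫_Ω J(x−y) φ(t,y) dy − φ] − a(t) φ = λ φ on ℝ × cl(Ω). Define ψ(t,x) = e^{−∫₀ᵗ (a(s) − a_T) ds} φ(t,x) and ψ_T(x) = (1/T) ∫₀ᵀ ψ(t,x) dt. Then ψ is T-periodic in t, ψ_T > 0 on cl(Ω), and ψ_T satisfies the elliptic eigenvalue equation d₁[∫_Ω J(x−y) ψ_T(y) dy − ψ_T(x)] + a_T ψ_T(x) + λ ψ_T(x) = 0 for all x ∈ cl(Ω). -/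
/-!
Since `∫₀ᵀ (a - a_T) = 0`, the weight `e^{-∫₀ᵗ (a - a_T)}` is `T`-periodic, so `ψ` inherits the
periodicity of `φ`. Multiplying the equation for `φ` by this weight, which does not depend on the
space variable, shows that `ψ` solves the same time-periodic nonlocal problem with `a(t)` replaced
by the constant `a_T`. Integrating that equation over one period kills `∂ₜψ`, and exchanging the
time and space integrals in the nonlocal term yields the elliptic equation for `ψ_T`.
-/

open Set MeasureTheory

/-- `ψ(t,x) = e^{−∫₀ᵗ (a(s) − a_T) ds} φ(t,x)`. -/
noncomputable def psiAux (T : ℝ) (aF : ℝ → ℝ) (φ : ℝ → ℝ → ℝ) (t x : ℝ) : ℝ :=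
  Real.exp (-∫ s in (0:ℝ)..t, (aF s - (1 / T) * ∫ u in (0:ℝ)..T, aF u)) * φ t x

/-- `ψ_T(x) = (1/T) ∫₀ᵀ ψ(t,x) dt`. -/
noncomputable def psiT (T : ℝ) (aF : ℝ → ℝ) (φ : ℝ → ℝ → ℝ) (x : ℝ) : ℝ :=
  (1 / T) * ∫ t in (0:ℝ)..T, psiAux T aF φ t x

open Function

lemma intervalIntegral_sub_average_eq_zero {f : ℝ → ℝ} {T : ℝ}
    (hf : IntervalIntegrable f volume 0 T) :
    ∫ s in (0:ℝ)..T, (f s - (1 / T) * ∫ u in (0:ℝ)..T, f u) = 0 := by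
  rcases eq_or_ne T 0 with rfl | hT
  · simp
  rw [intervalIntegral.integral_sub hf intervalIntegrable_const,
    intervalIntegral.integral_const, smul_eq_mul]
  field_simp
  ring

lemma Function.Periodic.intervalIntegral_sub_average {f : ℝ → ℝ} {T : ℝ} (hper : Periodic f T)
    (hf : ∀ t₁ t₂, IntervalIntegrable f volume t₁ t₂) :
    Periodic (fun t => ∫ s in (0:ℝ)..t, (f s - (1 / T) * ∫ u in (0:ℝ)..T, f u)) T := by
  intro t
  have hg : ∀ t₁ t₂, IntervalIntegrable (fun s => f s - (1 / T) * ∫ u in (0:ℝ)..T, f u)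
      volume t₁ t₂ := fun t₁ t₂ => (hf t₁ t₂).sub intervalIntegrable_const
  have hgper : Periodic (fun s => f s - (1 / T) * ∫ u in (0:ℝ)..T, f u) T := fun s => by
    simp only [hper s]
  simp only [hgper.intervalIntegral_add_eq_add 0 t hg, zero_add,
    intervalIntegral_sub_average_eq_zero (hf 0 T), add_zero]

lemma continuous_intervalIntegral_of_continuousOn {F : ℝ → ℝ → ℝ} {a b : ℝ} (hab : a ≤ b)
    (hF : ContinuousOn (uncurry F) (univ ×ˢ Icc a b)) :
    Continuous fun t => ∫ y in a..b, F t y := by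
  have hclamp : Continuous fun p : ℝ × ℝ => F p.1 (projIcc a b hab p.2) :=
    hF.comp_continuous (continuous_fst.prodMk
      (continuous_subtype_val.comp ((continuous_projIcc (h := hab)).comp continuous_snd)))
      fun p => ⟨mem_univ _, Subtype.mem _⟩
  have hclamp_eq : ∀ t, ∫ y in a..b, F t y = ∫ y in a..b, F t (projIcc a b hab y) := fun t =>
    intervalIntegral.integral_congr fun y hy => by
      rw [uIcc_of_le hab] at hy
      simp only [projIcc_of_mem hab hy]
  simpa only [hclamp_eq] using
    intervalIntegral.continuous_parametric_intervalIntegral_of_continuous' hclamp a b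

/-- The time derivative integrates to zero over a period, and the nonlocal term commutes with the
time average by Fubini. -/
theorem timeAverage_stationary_of_periodic {T d c a b x : ℝ} {J : ℝ → ℝ} {ψ : ℝ → ℝ → ℝ}
    (hJ : Continuous J) (hψ : ContinuousOn (uncurry ψ) (univ ×ˢ Icc a b)) (hx : x ∈ Icc a b)
    (hper : ∀ t, ψ (t + T) x = ψ t x)
    (hderiv : ∀ t, HasDerivAt (fun s => ψ s x)
      (d * ((∫ y in a..b, J (x - y) * ψ t y) - ψ t x) + c * ψ t x) t) :
    d * ((∫ y in a..b, J (x - y) * ((1 / T) * ∫ t in (0:ℝ)..T, ψ t y))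
        - (1 / T) * ∫ t in (0:ℝ)..T, ψ t x)
      + c * ((1 / T) * ∫ t in (0:ℝ)..T, ψ t x) = 0 := by
  have hab : a ≤ b := hx.1.trans hx.2
  have hF : ContinuousOn (uncurry fun t y => J (x - y) * ψ t y) (univ ×ˢ Icc a b) :=
    (hJ.comp (continuous_const.sub continuous_snd)).continuousOn.mul hψ
  have hK : IntervalIntegrable (fun t => ∫ y in a..b, J (x - y) * ψ t y) volume 0 T :=
    (continuous_intervalIntegral_of_continuousOn hab hF).intervalIntegrable 0 T
  have hψx : IntervalIntegrable (fun t => ψ t x) volume 0 T :=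
    (hψ.comp_continuous (continuous_id.prodMk continuous_const)
      fun t => ⟨mem_univ t, hx⟩).intervalIntegrable 0 T
  have hperiod : ∫ t in (0:ℝ)..T,
      (d * ((∫ y in a..b, J (x - y) * ψ t y) - ψ t x) + c * ψ t x) = 0 := by
    rw [intervalIntegral.integral_eq_sub_of_hasDerivAt (fun t _ => hderiv t)
      (((hK.sub hψx).const_mul d).add (hψx.const_mul c)), ← zero_add T, hper 0, sub_self]
  have hfubini : ∫ t in (0:ℝ)..T, ∫ y in a..b, J (x - y) * ψ t y
      = ∫ y in a..b, J (x - y) * ∫ t in (0:ℝ)..T, ψ t y := by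
    rw [intervalIntegral_intervalIntegral_swap]
    · simp only [intervalIntegral.integral_const_mul]
    · refine (hF.mono ?_).integrableOn_compact (isCompact_uIcc.prod isCompact_Icc) |>.mono_set
        (prod_mono uIoc_subset_uIcc (uIoc_of_le hab ▸ Ioc_subset_Icc_self))
      exact prod_mono (subset_univ _) subset_rfl
  rw [intervalIntegral.integral_add ((hK.sub hψx).const_mul d) (hψx.const_mul c),
    intervalIntegral.integral_const_mul, intervalIntegral.integral_const_mul,
    intervalIntegral.integral_sub hK hψx, hfubini] at hperiod
  simp only [mul_left_comm (J _), intervalIntegral.integral_const_mul]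
  linear_combination (1 / T) * hperiod

section ChangeOfUnknown

variable {T lam a b : ℝ} {aF J : ℝ → ℝ} {φ φt : ℝ → ℝ → ℝ}

lemma psiAux_add_period (haC : Continuous aF) (haper : Periodic aF T) {t x : ℝ}
    (hφper : φ (t + T) x = φ t x) : psiAux T aF φ (t + T) x = psiAux T aF φ t x := by
  have hA := haper.intervalIntegral_sub_average (fun t₁ t₂ => haC.intervalIntegrable t₁ t₂) t
  simp only at hA
  simp only [psiAux, hφper, hA]

/-- The weight `e^{-∫₀ᵗ (a - a_T)}` replaces the time-dependent rate `a(t)` by its average `a_T`;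
being independent of `y`, it passes through the nonlocal term. -/
lemma hasDerivAt_psiAux (d₁ : ℝ) (haC : Continuous aF) {t x : ℝ}
    (hφd : HasDerivAt (fun s => φ s x) (φt t x) t)
    (heig : φt t x - d₁ * ((∫ y in a..b, J (x - y) * φ t y) - φ t x) - aF t * φ t x
      = lam * φ t x) :
    HasDerivAt (fun s => psiAux T aF φ s x)
      (d₁ * ((∫ y in a..b, J (x - y) * psiAux T aF φ t y) - psiAux T aF φ t x)
        + ((1 / T) * (∫ u in (0:ℝ)..T, aF u) + lam) * psiAux T aF φ t x) t := by
  have hA : HasDerivAt (fun s => ∫ r in (0:ℝ)..s, (aF r - (1 / T) * ∫ u in (0:ℝ)..T, aF u))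
      (aF t - (1 / T) * ∫ u in (0:ℝ)..T, aF u) t :=
    ((haC.sub continuous_const).integral_hasStrictDerivAt 0 t).hasDerivAt
  refine (hA.neg.exp.fun_mul hφd).congr_deriv ?_
  simp only [psiAux, Pi.neg_apply, mul_left_comm (J _), intervalIntegral.integral_const_mul]
  linear_combination Real.exp (-∫ r in (0:ℝ)..t, (aF r - (1 / T) * ∫ u in (0:ℝ)..T, aF u)) * heig

lemma continuousOn_psiAux (haC : Continuous aF)
    (hφcont : ContinuousOn (fun p : ℝ × ℝ => φ p.1 p.2) (univ ×ˢ Icc a b)) :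
    ContinuousOn (uncurry (psiAux T aF φ)) (univ ×ˢ Icc a b) := by
  have hA : Continuous fun t => ∫ s in (0:ℝ)..t, (aF s - (1 / T) * ∫ u in (0:ℝ)..T, aF u) :=
    intervalIntegral.continuous_primitive
      (fun _ _ => (haC.sub continuous_const).intervalIntegrable _ _) 0
  exact (hA.comp continuous_fst).neg.rexp.continuousOn.mul hφcont

lemma psiT_pos (hT : 0 < T) {x : ℝ} (hφpos : ∀ t, 0 < φ t x)
    (hψx : Continuous fun t => psiAux T aF φ t x) : 0 < psiT T aF φ x :=
  mul_pos (one_div_pos.2 hT) <| intervalIntegral.intervalIntegral_pos_of_pos_on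
    (hψx.intervalIntegrable 0 T) (fun t _ => mul_pos (Real.exp_pos _) (hφpos t)) hT

end ChangeOfUnknown

theorem stmt_13_general (T d₁ lam a b : ℝ) (aF J : ℝ → ℝ) (φ φt : ℝ → ℝ → ℝ)
    (hT : 0 < T)
    (haC : Continuous aF) (haper : ∀ t, aF (t + T) = aF t)
    (hJlip : ∃ L : NNReal, LipschitzWith L J)
    (hφpos : ∀ t, ∀ x ∈ Icc a b, 0 < φ t x)
    (hφper : ∀ t, ∀ x ∈ Icc a b, φ (t + T) x = φ t x)
    (hφcont : ContinuousOn (fun p : ℝ × ℝ => φ p.1 p.2) (univ ×ˢ Icc a b))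
    (hφd : ∀ t, ∀ x ∈ Icc a b, HasDerivAt (fun s => φ s x) (φt t x) t)
    (heig : ∀ t, ∀ x ∈ Icc a b,
      φt t x - d₁ * ((∫ y in a..b, J (x - y) * φ t y) - φ t x) - aF t * φ t x
        = lam * φ t x) :
    (∀ t, ∀ x ∈ Icc a b, psiAux T aF φ (t + T) x = psiAux T aF φ t x) ∧
    (∀ x ∈ Icc a b, 0 < psiT T aF φ x) ∧
    (∀ x ∈ Icc a b,
      d₁ * ((∫ y in a..b, J (x - y) * psiT T aF φ y) - psiT T aF φ x)
        + ((1 / T) * ∫ u in (0:ℝ)..T, aF u) * psiT T aF φ x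
        + lam * psiT T aF φ x = 0) := by
  obtain ⟨L, hJ⟩ := hJlip
  have hψ := continuousOn_psiAux (T := T) haC hφcont
  have hper : ∀ t, ∀ x ∈ Icc a b, psiAux T aF φ (t + T) x = psiAux T aF φ t x :=
    fun t x hx => psiAux_add_period haC haper (hφper t x hx)
  refine ⟨hper, fun x hx => psiT_pos hT (fun t => hφpos t x hx) ?_, fun x hx => ?_⟩
  · exact hψ.comp_continuous (continuous_id.prodMk continuous_const) fun t => ⟨mem_univ t, hx⟩
  · have hstat := timeAverage_stationary_of_periodic hJ.continuous hψ hx (fun t => hper t x hx)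
      fun t => hasDerivAt_psiAux d₁ haC (hφd t x hx) (heig t x hx)
    simp only [psiT]
    linear_combination hstat

/-- Lemma 3.3: the change of unknown `ψ = e^{−∫₀ᵗ(a−a_T)}φ`
transforms the time-periodic nonlocal eigenvalue problem
`∂_tφ − d₁[∫_Ω J(x−y)φ(t,y)dy − φ] − a(t)φ = λφ` into the elliptic problem:
`ψ` is `T`-periodic in `t`, `ψ_T > 0`, and
`d₁[∫_Ω J(x−y)ψ_T(y)dy − ψ_T] + a_Tψ_T + λψ_T = 0`. -/
theorem stmt_13 (T d₁ lam a b : ℝ) (aF J : ℝ → ℝ) (φ φt : ℝ → ℝ → ℝ)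
    (hT : 0 < T) (hd₁ : 0 < d₁) (hab : a < b)
    (haC : Continuous aF) (haper : ∀ t, aF (t + T) = aF t)
    (hJlip : ∃ L : NNReal, LipschitzWith L J) (hJpos : ∀ x, 0 ≤ J x)
    (hJsymm : ∀ x, J (-x) = J x) (hJint : Integrable J) (hJ1 : ∫ x, J x = 1)
    (hφpos : ∀ t, ∀ x ∈ Icc a b, 0 < φ t x)
    (hφper : ∀ t, ∀ x ∈ Icc a b, φ (t + T) x = φ t x)
    (hφcont : ContinuousOn (fun p : ℝ × ℝ => φ p.1 p.2) (univ ×ˢ Icc a b))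
    (hφd : ∀ t, ∀ x ∈ Icc a b, HasDerivAt (fun s => φ s x) (φt t x) t)
    (hφtcont : ContinuousOn (fun p : ℝ × ℝ => φt p.1 p.2) (univ ×ˢ Icc a b))
    (heig : ∀ t, ∀ x ∈ Icc a b,
      φt t x - d₁ * ((∫ y in a..b, J (x - y) * φ t y) - φ t x) - aF t * φ t x
        = lam * φ t x) :
    (∀ t, ∀ x ∈ Icc a b, psiAux T aF φ (t + T) x = psiAux T aF φ t x) ∧
    (∀ x ∈ Icc a b, 0 < psiT T aF φ x) ∧
    (∀ x ∈ Icc a b,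
      d₁ * ((∫ y in a..b, J (x - y) * psiT T aF φ y) - psiT T aF φ x)
        + ((1 / T) * ∫ u in (0:ℝ)..T, aF u) * psiT T aF φ x
        + lam * psiT T aF φ x = 0) :=
  stmt_13_general T d₁ lam a b aF J φ φt hT haC haper hJlip hφpos hφper hφcont hφd heig
end

section
/- Let J : ℝ → ℝ satisfy 0 ≤ J ≤ J_max, and let u : [0,∞) × ℝ → ℝ satisfy 0 ≤ u ≤ U and |∂_t u| ≤ U' (wherever defined), with moving boundaries g, h satisfying g nonincreasing, h nondecreasing, and bounded with g(t) ≥ g_∞ > −∞, h(t) ≤ h_∞ < ∞. Define φ₂(t) = ∫_{g(t)}^{h(t)} ∫_{h(t)}^{∞} J(x − y) u(t,x) dy dx (assume the inner integral ∫_{h(t)}^∞ J(x−y) dy ≤ 1 is finite). Then for all t > s ≥ 0: |φ₂(t) − φ₂(s)| ≤ U'(t−s)(h(s)−g(s)) + U(g(s)−g(t)) + 2U(h(t)−h(s)); in particular if additionally g, h are Lipschitz then φ₂ is Lipschitz on [0,∞). -/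
open Set MeasureTheory

/-- Lemma 4.3: Lipschitz-in-time estimate for the nonlocal flux
`φ₂(t) = ∫_{g(t)}^{h(t)} ∫_{h(t)}^∞ J(x−y) u(t,x) dy dx`:
`|φ₂(t) − φ₂(s)| ≤ U'(t−s)(h(s)−g(s)) + U(g(s)−g(t)) + 2U(h(t)−h(s))`. -/
theorem stmt_15 (U U' Jmax ginfty hinfty : ℝ) (J : ℝ → ℝ) (g h : ℝ → ℝ)
    (u ut : ℝ → ℝ → ℝ)
    (hJpos : ∀ x, 0 ≤ J x) (hJbd : ∀ x, J x ≤ Jmax) (hJint : Integrable J)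
    (hJ1 : ∫ x, J x = 1)
    (hu0 : ∀ t ≥ (0:ℝ), ∀ x, 0 ≤ u t x ∧ u t x ≤ U)
    (hut : ∀ x : ℝ, ∀ t ≥ (0:ℝ), HasDerivAt (fun s => u s x) (ut t x) t)
    (hut_bd : ∀ t ≥ (0:ℝ), ∀ x, |ut t x| ≤ U')
    (hucont : Continuous (fun p : ℝ × ℝ => u p.1 p.2))
    (hganti : AntitoneOn g (Ici 0)) (hhmono : MonotoneOn h (Ici 0))
    (hgbd : ∀ t ≥ (0:ℝ), ginfty ≤ g t) (hhbd : ∀ t ≥ (0:ℝ), h t ≤ hinfty)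
    (hgh : ∀ t ≥ (0:ℝ), g t ≤ h t) :
    ∀ s t : ℝ, 0 ≤ s → s < t →
      |(∫ x in g t..h t, ∫ y in Ioi (h t), J (x - y) * u t x)
          - ∫ x in g s..h s, ∫ y in Ioi (h s), J (x - y) * u s x|
        ≤ U' * (t - s) * (h s - g s) + U * (g s - g t) + 2 * U * (h t - h s) := by
  intro s t hs0 hst
  have ht0 : (0:ℝ) ≤ t := hs0.trans hst.le
  set F : ℝ → ℝ := fun r => ∫ z in Iio r, J z with hFdef
  -- basic properties of F
  have hFmono : Monotone F := by
    intro a b hab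
    exact setIntegral_mono_set hJint.integrableOn (ae_of_all _ hJpos)
      (HasSubset.Subset.eventuallyLE (Iio_subset_Iio hab))
  have hF0 : ∀ r, 0 ≤ F r := fun r =>
    setIntegral_nonneg measurableSet_Iio fun x _ => hJpos x
  have hF1 : ∀ r, F r ≤ 1 := by
    intro r
    have := setIntegral_le_integral hJint (ae_of_all _ hJpos) (s := Iio r)
    rw [hJ1] at this; exact this
  -- inner integral identity
  have hinner : ∀ b x : ℝ, (∫ y in Ioi b, J (x - y)) = F (x - b) := by
    intro b x
    have hmp := Measure.measurePreserving_sub_left (volume : Measure ℝ) x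
    have hemb : MeasurableEmbedding (fun y : ℝ => x - y) :=
      (MeasurableEquiv.subLeft x).measurableEmbedding
    have hpre : Ioi b = (fun y : ℝ => x - y) ⁻¹' Iio (x - b) := by
      ext y; simp [sub_lt_sub_iff_left]
    rw [hFdef]
    rw [hpre]
    exact hmp.setIntegral_preimage_emb hemb J (Iio (x - b))
  -- rewrite the two integrals
  have hrw : ∀ τ b : ℝ,
      (∫ x in g τ..h τ, ∫ y in Ioi b, J (x - y) * u τ x)
        = ∫ x in g τ..h τ, u τ x * F (x - b) := by
    intro τ b
    refine intervalIntegral.integral_congr fun x _ => ?_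
    rw [integral_mul_const, hinner, mul_comm]
  rw [hrw t (h t), hrw s (h s)]
  -- order facts
  have hmem : ∀ τ : ℝ, 0 ≤ τ → τ ∈ Ici (0:ℝ) := fun τ hτ => hτ
  have hgg : g t ≤ g s := hganti (hmem s hs0) (hmem t ht0) hst.le
  have hhh : h s ≤ h t := hhmono (hmem s hs0) (hmem t ht0) hst.le
  have hgshs : g s ≤ h s := hgh s hs0
  have hU0 : 0 ≤ U := le_trans (hu0 0 le_rfl 0).1 (hu0 0 le_rfl 0).2
  have hU'0 : 0 ≤ U' := (abs_nonneg _).trans (hut_bd 0 le_rfl 0)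
  -- integrability
  have hFint : ∀ c a b : ℝ, IntervalIntegrable (fun x => F (x - c)) volume a b := by
    intro c a b
    have : Monotone fun x => F (x - c) := fun x y hxy => hFmono (by linarith : x - c ≤ y - c)
    exact this.intervalIntegrable
  have hcont : ∀ τ : ℝ, Continuous (fun x => u τ x) := fun τ =>
    hucont.comp (continuous_const.prodMk continuous_id)
  have huF : ∀ τ c a b : ℝ, IntervalIntegrable (fun x => u τ x * F (x - c)) volume a b :=
    fun τ c a b => (hFint c a b).continuousOn_mul (hcont τ).continuousOn
  -- pointwise bound for the integrand
  have hbd : ∀ τ : ℝ, 0 ≤ τ → ∀ c x : ℝ, ‖u τ x * F (x - c)‖ ≤ U := by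
    intro τ hτ c x
    rw [Real.norm_eq_abs, abs_of_nonneg (mul_nonneg (hu0 τ hτ x).1 (hF0 _))]
    calc u τ x * F (x - c) ≤ U * 1 :=
          mul_le_mul (hu0 τ hτ x).2 (hF1 _) (hF0 _) hU0
      _ = U := mul_one U
  -- MVT bound in time
  have hud : ∀ x, |u t x - u s x| ≤ U' * (t - s) := by
    intro x
    have key := Convex.norm_image_sub_le_of_norm_hasDerivWithin_le
      (f := fun τ => u τ x) (f' := fun τ => ut τ x) (C := U') (s := Icc s t)
      (fun τ hτ => ((hut x τ (hs0.trans hτ.1)).hasDerivWithinAt))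
      (fun τ hτ => by rw [Real.norm_eq_abs]; exact hut_bd τ (hs0.trans hτ.1) x)
      (convex_Icc s t) (Set.mem_Icc.mpr ⟨le_rfl, hst.le⟩) (Set.mem_Icc.mpr ⟨hst.le, le_rfl⟩)
    rw [Real.norm_eq_abs, Real.norm_eq_abs, abs_of_nonneg (by linarith : (0:ℝ) ≤ t - s)] at key
    exact key
  -- abbreviations
  set A1 : ℝ := ∫ x in g t..g s, u t x * F (x - h t) with hA1
  set A2 : ℝ := ∫ x in g s..h s, u t x * F (x - h t) with hA2
  set A3 : ℝ := ∫ x in h s..h t, u t x * F (x - h t) with hA3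
  set B' : ℝ := ∫ x in g s..h s, u s x * F (x - h t) with hB'
  set B : ℝ := ∫ x in g s..h s, u s x * F (x - h s) with hB
  -- split the t-integral
  have hsplit1 : A1 + A2 = ∫ x in g t..h s, u t x * F (x - h t) :=
    intervalIntegral.integral_add_adjacent_intervals (huF t (h t) (g t) (g s)) (huF t (h t) (g s) (h s))
  have hsplit2 : (∫ x in g t..h s, u t x * F (x - h t)) + A3
      = ∫ x in g t..h t, u t x * F (x - h t) :=
    intervalIntegral.integral_add_adjacent_intervals (huF t (h t) (g t) (h s)) (huF t (h t) (h s) (h t))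
  -- bound A1 and A3
  have hA1bd : |A1| ≤ U * (g s - g t) := by
    have := intervalIntegral.norm_integral_le_of_norm_le_const
      (C := U) (f := fun x => u t x * F (x - h t)) (a := g t) (b := g s)
      (fun x _ => hbd t ht0 (h t) x)
    rw [Real.norm_eq_abs, abs_of_nonneg (by linarith : (0:ℝ) ≤ g s - g t)] at this
    exact this
  have hA3bd : |A3| ≤ U * (h t - h s) := by
    have := intervalIntegral.norm_integral_le_of_norm_le_const
      (C := U) (f := fun x => u t x * F (x - h t)) (a := h s) (b := h t)
      (fun x _ => hbd t ht0 (h t) x)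
    rw [Real.norm_eq_abs, abs_of_nonneg (by linarith : (0:ℝ) ≤ h t - h s)] at this
    exact this
  -- bound A2 - B'
  have hA2B' : |A2 - B'| ≤ U' * (t - s) * (h s - g s) := by
    have hsub : A2 - B' = ∫ x in g s..h s, (u t x * F (x - h t) - u s x * F (x - h t)) :=
      (intervalIntegral.integral_sub (huF t (h t) (g s) (h s)) (huF s (h t) (g s) (h s))).symm
    rw [hsub]
    have := intervalIntegral.norm_integral_le_of_norm_le_const
      (C := U' * (t - s)) (f := fun x => u t x * F (x - h t) - u s x * F (x - h t))
      (a := g s) (b := h s) (fun x _ => by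
        show ‖u t x * F (x - h t) - u s x * F (x - h t)‖ ≤ U' * (t - s)
        rw [Real.norm_eq_abs, ← sub_mul, abs_mul]
        calc |u t x - u s x| * |F (x - h t)| ≤ (U' * (t - s)) * 1 := by
              apply mul_le_mul (hud x) _ (abs_nonneg _) (by nlinarith)
              rw [abs_of_nonneg (hF0 _)]; exact hF1 _
          _ = U' * (t - s) := mul_one _)
    rw [Real.norm_eq_abs, abs_of_nonneg (by linarith : (0:ℝ) ≤ h s - g s)] at this
    exact this
  -- key shift estimate
  have hkey : (∫ x in g s..h s, F (x - h s)) - (∫ x in g s..h s, F (x - h t)) ≤ h t - h s := by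
    rw [intervalIntegral.integral_comp_sub_right (fun x => F x) (h s),
      intervalIntegral.integral_comp_sub_right (fun x => F x) (h t)]
    have hFia : ∀ a b : ℝ, IntervalIntegrable F volume a b := fun a b => hFmono.intervalIntegrable
    have h1 : (∫ x in (g s - h t)..(g s - h s), F x) + ∫ x in (g s - h s)..(h s - h s), F x
        = ∫ x in (g s - h t)..(h s - h s), F x :=
      intervalIntegral.integral_add_adjacent_intervals (hFia _ _) (hFia _ _)
    have h2 : (∫ x in (g s - h t)..(h s - h t), F x) + ∫ x in (h s - h t)..(h s - h s), F x
        = ∫ x in (g s - h t)..(h s - h s), F x :=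
      intervalIntegral.integral_add_adjacent_intervals (hFia _ _) (hFia _ _)
    have hX : (∫ x in (h s - h t)..(h s - h s), F x) ≤ h t - h s := by
      have := intervalIntegral.norm_integral_le_of_norm_le_const
        (C := 1) (f := F) (a := h s - h t) (b := h s - h s)
        (fun x _ => by rw [Real.norm_eq_abs, abs_of_nonneg (hF0 x)]; exact hF1 x)
      rw [Real.norm_eq_abs] at this
      have h4 : |h s - h s - (h s - h t)| = h t - h s := by
        rw [abs_of_nonneg (by linarith)]; ring
      rw [h4, one_mul] at this
      exact (le_abs_self _).trans this
    have hY : 0 ≤ ∫ x in (g s - h t)..(g s - h s), F x :=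
      intervalIntegral.integral_nonneg (by linarith) (fun x _ => hF0 x)
    linarith
  -- bound B - B'
  have hBB'0 : 0 ≤ B - B' := by
    rw [hB, hB', ← intervalIntegral.integral_sub (huF s (h s) (g s) (h s)) (huF s (h t) (g s) (h s))]
    refine intervalIntegral.integral_nonneg hgshs fun x _ => ?_
    have := hFmono (by linarith : x - h t ≤ x - h s)
    nlinarith [(hu0 s hs0 x).1]
  have hBB'bd : B - B' ≤ U * (h t - h s) := by
    have hsub : B - B' = ∫ x in g s..h s, (u s x * F (x - h s) - u s x * F (x - h t)) :=
      (intervalIntegral.integral_sub (huF s (h s) (g s) (h s)) (huF s (h t) (g s) (h s))).symm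
    have hmono : (∫ x in g s..h s, (u s x * F (x - h s) - u s x * F (x - h t)))
        ≤ ∫ x in g s..h s, U * (F (x - h s) - F (x - h t)) := by
      refine intervalIntegral.integral_mono_on hgshs
        ((huF s (h s) (g s) (h s)).sub (huF s (h t) (g s) (h s)))
        (((hFint (h s) (g s) (h s)).sub (hFint (h t) (g s) (h s))).const_mul U)
        (fun x _ => ?_)
      have h1 := (hu0 s hs0 x).1
      have h2 := (hu0 s hs0 x).2
      have h3 := hFmono (by linarith : x - h t ≤ x - h s)
      nlinarith
    have heq : (∫ x in g s..h s, U * (F (x - h s) - F (x - h t)))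
        = U * ((∫ x in g s..h s, F (x - h s)) - ∫ x in g s..h s, F (x - h t)) := by
      rw [intervalIntegral.integral_const_mul,
        intervalIntegral.integral_sub (hFint (h s) (g s) (h s)) (hFint (h t) (g s) (h s))]
    rw [hsub]
    calc (∫ x in g s..h s, (u s x * F (x - h s) - u s x * F (x - h t)))
        ≤ U * ((∫ x in g s..h s, F (x - h s)) - ∫ x in g s..h s, F (x - h t)) := heq ▸ hmono
      _ ≤ U * (h t - h s) := mul_le_mul_of_nonneg_left hkey hU0
  -- combine
  have hA1' := abs_le.mp hA1bd
  have hA3' := abs_le.mp hA3bd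
  have hA2B'' := abs_le.mp hA2B'
  rw [abs_le]
  constructor <;> [skip; skip] <;>
  · have hAA : (∫ x in g t..h t, u t x * F (x - h t)) = A1 + A2 + A3 := by
      rw [← hsplit2, ← hsplit1]
    rw [hAA]
    linarith [hA1'.1, hA1'.2, hA3'.1, hA3'.2, hA2B''.1, hA2B''.2, hBB'0, hBB'bd]
end

section
/- Let d₂ > 0, τ ∈ (0,1], c_T > 0, and for l > 0 let λ₁(l) denote the principal Dirichlet eigenvalue infimum λ₁(l) = inf over nonzero ω ∈ H¹₀((0,l)) of [d₂τ ∫₀ˡ (ω')² − d₂(1−τ) ∫₀ˡ∫₀ˡ J(x−y) ω(y)ω(x) dy dx] / ∫₀ˡ ω² + d₂(1−τ) − c_T, where J satisfies: Lipschitz, nonnegative, symmetric, ∫_ℝ J = 1. Then (i) λ₁(l) ≥ d₂τ · π²/l² − c_T (using the kernel bound ∫∫J ωω ≤ ∫ω²), hence lim_{l→0⁺} λ₁(l) = +∞; and (ii) liminf_{l→∞} λ₁(l) ≥ −c_T. -/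
/-!
Wirtinger's inequality `∫ ω'² ≥ (π/l)² ∫ ω²` for `ω(0) = ω(l) = 0` follows from Picone's identity
`ω'² - k²ω² - (k ω² cot kx)' = (ω' - k ω cot kx)² ≥ 0` with `k = π/l`: integrating over `[0, l]`,
the boundary terms vanish because `ω² / sin kx → 0` at both ends. The nonlocal term is controlled
by a Schur test: `2 |J(x-y) u(y) v(x)| ≤ J(x-y) (u(y)² + v(x)²)`, and every row and column of the
kernel `J(x-y)` on the square has mass at most `∫ J = 1`. Together they give
`λ₁(l) ≥ d₂τπ²/l² - c_T`.
Testing with `sin (πx/l)` bounds `λ₁(l)` from above uniformly for `l ≥ 1`, which is what makes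
the `liminf` as `l → ∞` the genuine one rather than a junk value.
-/

open Set Filter

/-- The Rayleigh-type quotient for the mixed local–nonlocal Dirichlet operator
`−(𝓛̃_{(0,l)} + c_T)` evaluated at a test function `ω` with derivative `ω'`. -/
noncomputable def rayleighQuot (d₂ τ cT : ℝ) (J : ℝ → ℝ) (l : ℝ) (ω ω' : ℝ → ℝ) : ℝ :=
  (d₂ * τ * (∫ x in (0:ℝ)..l, (ω' x) ^ 2)
      - d₂ * (1 - τ) * ∫ x in (0:ℝ)..l, ∫ y in (0:ℝ)..l, J (x - y) * ω y * ω x)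
    / (∫ x in (0:ℝ)..l, (ω x) ^ 2)
  + d₂ * (1 - τ) - cT

/-- The principal eigenvalue `λ₁(l)` as the infimum of the Rayleigh quotients over
(smooth representatives of) nonzero functions in `H¹₀((0,l))`. -/
noncomputable def lambdaOne (d₂ τ cT : ℝ) (J : ℝ → ℝ) (l : ℝ) : ℝ :=
  sInf {r : ℝ | ∃ ω ω' : ℝ → ℝ, (∀ x, HasDerivAt ω (ω' x) x) ∧ Continuous ω' ∧
    ω 0 = 0 ∧ ω l = 0 ∧ (0 < ∫ x in (0:ℝ)..l, (ω x) ^ 2) ∧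
    r = rayleighQuot d₂ τ cT J l ω ω'}

open MeasureTheory Real Topology

theorem tendsto_sq_div_nhdsNE_of_hasDerivAt {f s : ℝ → ℝ} {f' s' a : ℝ}
    (hf : HasDerivAt f f' a) (hfa : f a = 0) (hs : HasDerivAt s s' a) (hsa : s a = 0)
    (hs' : s' ≠ 0) : Tendsto (fun x => f x ^ 2 / s x) (𝓝[≠] a) (𝓝 0) := by
  have hsub : Tendsto (fun x => x - a) (𝓝[≠] a) (𝓝 0) :=
    tendsto_nhdsWithin_of_tendsto_nhds (by simpa using (continuous_sub_right a).tendsto a)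
  have h := (((hasDerivAt_iff_tendsto_slope.mp hf).pow 2).div
    (hasDerivAt_iff_tendsto_slope.mp hs) hs').mul hsub
  rw [mul_zero] at h
  refine h.congr' (eventually_nhdsWithin_of_forall fun x (hx : x ≠ a) => ?_)
  have hxa : x - a ≠ 0 := sub_ne_zero.mpr hx
  simp only [Pi.div_apply, slope_def_field, hfa, hsa, sub_zero]
  by_cases hsx : s x = 0
  · simp [hsx]
  · field_simp

theorem hasDerivAt_picone {ω : ℝ → ℝ} {w k x : ℝ} (hω : HasDerivAt ω w x)
    (hs : sin (k * x) ≠ 0) :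
    HasDerivAt (fun y => k * cos (k * y) * (ω y ^ 2 / sin (k * y)))
      (w ^ 2 - k ^ 2 * ω x ^ 2 - (w - k * ω x * cos (k * x) / sin (k * x)) ^ 2) x := by
  have hk : HasDerivAt (fun y => k * y) k x := by simpa using (hasDerivAt_id x).const_mul k
  have hsin : HasDerivAt (fun y => sin (k * y)) (cos (k * x) * k) x :=
    (hasDerivAt_sin _).comp x hk
  have hcos : HasDerivAt (fun y => k * cos (k * y)) (k * (-sin (k * x) * k)) x :=
    ((hasDerivAt_cos _).comp x hk).const_mul k
  have hsq : HasDerivAt (fun y => ω y ^ 2) (2 * ω x * w) x := by simpa using hω.fun_pow 2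
  refine (hcos.mul (hsq.fun_div hsin hs)).congr_deriv ?_
  field_simp
  ring

theorem sin_pi_div_mul_ne_zero {l x : ℝ} (hx : x ∈ Ioo 0 l) : sin (π / l * x) ≠ 0 := by
  have hl : 0 < l := hx.1.trans hx.2
  refine (sin_pos_of_pos_of_lt_pi (by have := hx.1; positivity) ?_).ne'
  calc π / l * x < π / l * l := by gcongr; exact hx.2
    _ = π := div_mul_cancel₀ _ hl.ne'

theorem continuousAt_picone_of_eq_zero {ω : ℝ → ℝ} {w k a : ℝ} (hω : HasDerivAt ω w a)
    (hωa : ω a = 0) (hsa : sin (k * a) = 0) (hca : k * cos (k * a) ≠ 0) :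
    ContinuousAt (fun y => k * cos (k * y) * (ω y ^ 2 / sin (k * y))) a := by
  have hk : HasDerivAt (fun y => k * y) k a := by simpa using (hasDerivAt_id a).const_mul k
  have hsin : HasDerivAt (fun y => sin (k * y)) (cos (k * a) * k) a :=
    (hasDerivAt_sin _).comp a hk
  have hlim := tendsto_sq_div_nhdsNE_of_hasDerivAt hω hωa hsin hsa (by rwa [mul_comm])
  rw [← continuousWithinAt_compl_self, ContinuousWithinAt]
  simpa [hsa] using ((continuous_const.mul (continuous_cos.comp
    (continuous_const.mul continuous_id))).tendsto a).mono_left nhdsWithin_le_nhds |>.mul hlim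

theorem wirtinger_inequality {ω ω' : ℝ → ℝ} {l : ℝ} (hl : 0 < l)
    (hω : ∀ x, HasDerivAt ω (ω' x) x) (hω' : Continuous ω') (h0 : ω 0 = 0) (hl0 : ω l = 0) :
    (π / l) ^ 2 * ∫ x in (0:ℝ)..l, ω x ^ 2 ≤ ∫ x in (0:ℝ)..l, ω' x ^ 2 := by
  set k := π / l
  have hkl : k * l = π := div_mul_cancel₀ _ hl.ne'
  have hk : k ≠ 0 := (div_pos pi_pos hl).ne'
  have hωc : Continuous ω := continuous_iff_continuousAt.mpr fun x => (hω x).continuousAt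
  have hcont : ContinuousOn (fun y => k * cos (k * y) * (ω y ^ 2 / sin (k * y))) (Icc 0 l) := by
    intro x hx
    refine ContinuousAt.continuousWithinAt ?_
    rcases eq_endpoints_or_mem_Ioo_of_mem_Icc hx with rfl | rfl | hx
    · exact continuousAt_picone_of_eq_zero (hω 0) h0 (by simp) (by simpa)
    · exact continuousAt_picone_of_eq_zero (hω _) hl0 (by simp [hkl]) (by simpa [hkl])
    · have := sin_pi_div_mul_ne_zero hx
      fun_prop (disch := assumption)
  have key := intervalIntegral.sub_le_integral_of_hasDeriv_right_of_le hl.le hcont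
    (fun x hx => (hasDerivAt_picone (hω x) (sin_pi_div_mul_ne_zero hx)).hasDerivWithinAt)
    (φ := fun x => ω' x ^ 2 - k ^ 2 * ω x ^ 2) (by fun_prop : Continuous _).integrableOn_Icc
    (fun x _ => sub_le_self _ (sq_nonneg _))
  rw [intervalIntegral.integral_sub (Continuous.intervalIntegrable (by fun_prop) _ _)
    (Continuous.intervalIntegrable (by fun_prop) _ _), intervalIntegral.integral_const_mul] at key
  simpa [hkl] using key

theorem intervalIntegral_le_integral {f : ℝ → ℝ} (hf : Integrable f) (hf0 : ∀ x, 0 ≤ f x)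
    {a b : ℝ} (hab : a ≤ b) : ∫ x in a..b, f x ≤ ∫ x, f x := by
  rw [intervalIntegral.integral_of_le hab]
  exact setIntegral_le_integral hf (Eventually.of_forall hf0)

theorem intervalIntegral_intervalIntegral_swap {f : ℝ → ℝ → ℝ}
    (hf : Continuous (Function.uncurry f)) {a b c d : ℝ} (hab : a ≤ b) (hcd : c ≤ d) :
    ∫ x in a..b, ∫ y in c..d, f x y = ∫ y in c..d, ∫ x in a..b, f x y := by
  simp_rw [intervalIntegral.integral_of_le hab, intervalIntegral.integral_of_le hcd]
  apply integral_integral_swap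
  rw [Measure.prod_restrict]
  exact (hf.continuousOn.integrableOn_compact (isCompact_Icc.prod isCompact_Icc)).mono_set
    (prod_mono Ioc_subset_Icc_self Ioc_subset_Icc_self)

section Kernel

variable {J : ℝ → ℝ} {l : ℝ}

theorem integral_integral_kernel_mul_le (hl : 0 ≤ l) (hJc : Continuous J) (hJ0 : ∀ x, 0 ≤ J x)
    (hJint : Integrable J) {u v : ℝ → ℝ} (hu : Continuous u) (hv : Continuous v) :
    ∫ x in (0:ℝ)..l, ∫ y in (0:ℝ)..l, J (x - y) * u y * v x ≤
      (∫ x, J x) * ((∫ y in (0:ℝ)..l, u y ^ 2) + ∫ x in (0:ℝ)..l, v x ^ 2) / 2 := by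
  have hmass_y (x : ℝ) : ∫ y in (0:ℝ)..l, J (x - y) ≤ ∫ x, J x := by
    rw [intervalIntegral.integral_comp_sub_left J x]
    exact intervalIntegral_le_integral hJint hJ0 (by linarith)
  have hmass_x (y : ℝ) : ∫ x in (0:ℝ)..l, J (x - y) ≤ ∫ x, J x := by
    rw [intervalIntegral.integral_comp_sub_right J y]
    exact intervalIntegral_le_integral hJint hJ0 (by linarith)
  have hu_term : ∫ x in (0:ℝ)..l, ∫ y in (0:ℝ)..l, J (x - y) * u y ^ 2 ≤
      (∫ x, J x) * ∫ y in (0:ℝ)..l, u y ^ 2 := by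
    rw [intervalIntegral_intervalIntegral_swap (f := fun x y => J (x - y) * u y ^ 2) (by fun_prop)
      hl hl, ← intervalIntegral.integral_const_mul]
    refine intervalIntegral.integral_mono_on hl
      (Continuous.intervalIntegrable (by fun_prop) _ _)
      (Continuous.intervalIntegrable (by fun_prop) _ _) fun y _ => ?_
    rw [intervalIntegral.integral_mul_const]
    exact mul_le_mul_of_nonneg_right (hmass_x y) (sq_nonneg _)
  have hv_term : ∫ x in (0:ℝ)..l, ∫ y in (0:ℝ)..l, J (x - y) * v x ^ 2 ≤
      (∫ x, J x) * ∫ x in (0:ℝ)..l, v x ^ 2 := by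
    rw [← intervalIntegral.integral_const_mul]
    refine intervalIntegral.integral_mono_on hl
      (Continuous.intervalIntegrable (by fun_prop) _ _)
      (Continuous.intervalIntegrable (by fun_prop) _ _) fun x _ => ?_
    rw [intervalIntegral.integral_mul_const]
    exact mul_le_mul_of_nonneg_right (hmass_y x) (sq_nonneg _)
  have hpointwise : ∫ x in (0:ℝ)..l, ∫ y in (0:ℝ)..l, J (x - y) * u y * v x ≤
      ∫ x in (0:ℝ)..l, ((∫ y in (0:ℝ)..l, J (x - y) * u y ^ 2) +
        ∫ y in (0:ℝ)..l, J (x - y) * v x ^ 2) / 2 := by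
    refine intervalIntegral.integral_mono_on hl
      (Continuous.intervalIntegrable (by fun_prop) _ _)
      (Continuous.intervalIntegrable (by fun_prop) _ _) fun x _ => ?_
    rw [← intervalIntegral.integral_add (Continuous.intervalIntegrable (by fun_prop) _ _)
      (Continuous.intervalIntegrable (by fun_prop) _ _), ← intervalIntegral.integral_div]
    refine intervalIntegral.integral_mono_on hl
      (Continuous.intervalIntegrable (by fun_prop) _ _)
      (Continuous.intervalIntegrable (by fun_prop) _ _) fun y _ => ?_
    nlinarith [mul_nonneg (hJ0 (x - y)) (sq_nonneg (u y - v x))]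
  rw [intervalIntegral.integral_div, intervalIntegral.integral_add
    (Continuous.intervalIntegrable (by fun_prop) _ _)
    (Continuous.intervalIntegrable (by fun_prop) _ _)] at hpointwise
  linarith

theorem abs_integral_integral_kernel_mul_self_le (hl : 0 ≤ l) (hJc : Continuous J)
    (hJ0 : ∀ x, 0 ≤ J x) (hJint : Integrable J) {ω : ℝ → ℝ} (hω : Continuous ω) :
    |∫ x in (0:ℝ)..l, ∫ y in (0:ℝ)..l, J (x - y) * ω y * ω x| ≤
      (∫ x, J x) * ∫ x in (0:ℝ)..l, ω x ^ 2 := by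
  have hle := integral_integral_kernel_mul_le hl hJc hJ0 hJint hω hω
  have hge := integral_integral_kernel_mul_le hl hJc hJ0 hJint hω.neg hω
  simp only [Pi.neg_apply, mul_neg, neg_mul, intervalIntegral.integral_neg, neg_sq] at hge
  rw [abs_le]
  constructor <;> linarith

end Kernel

theorem integral_sin_pi_div_mul_sq {l : ℝ} (hl : 0 < l) :
    ∫ x in (0:ℝ)..l, sin (π / l * x) ^ 2 = l / 2 := by
  rw [intervalIntegral.integral_comp_mul_left (fun u => sin u ^ 2) (div_pos pi_pos hl).ne',
    integral_sin_sq, div_mul_cancel₀ _ hl.ne']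
  simp only [mul_zero, sin_zero, sin_pi, smul_eq_mul]
  field_simp
  ring

theorem integral_deriv_sin_pi_div_mul_sq {l : ℝ} (hl : 0 < l) :
    ∫ x in (0:ℝ)..l, (π / l * cos (π / l * x)) ^ 2 = (π / l) ^ 2 * (l / 2) := by
  simp_rw [mul_pow]
  rw [intervalIntegral.integral_const_mul,
    intervalIntegral.integral_comp_mul_left (fun u => cos u ^ 2) (div_pos pi_pos hl).ne',
    integral_cos_sq, div_mul_cancel₀ _ hl.ne']
  simp only [mul_zero, sin_zero, sin_pi, smul_eq_mul]
  field_simp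
  ring

section Rayleigh

variable {d₂ τ cT : ℝ} {J : ℝ → ℝ} {l : ℝ}

def rayleighValues (d₂ τ cT : ℝ) (J : ℝ → ℝ) (l : ℝ) : Set ℝ :=
  {r : ℝ | ∃ ω ω' : ℝ → ℝ, (∀ x, HasDerivAt ω (ω' x) x) ∧ Continuous ω' ∧
    ω 0 = 0 ∧ ω l = 0 ∧ (0 < ∫ x in (0:ℝ)..l, (ω x) ^ 2) ∧
    r = rayleighQuot d₂ τ cT J l ω ω'}

theorem rayleighQuot_sin_mem (hl : 0 < l) :
    rayleighQuot d₂ τ cT J l (fun x => sin (π / l * x)) (fun x => π / l * cos (π / l * x)) ∈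
      rayleighValues d₂ τ cT J l := by
  refine ⟨_, _, fun x => ?_, by fun_prop, by simp, by simp [div_mul_cancel₀ _ hl.ne'], ?_, rfl⟩
  · simpa [mul_comm] using ((hasDerivAt_id x).const_mul (π / l)).sin
  · rw [integral_sin_pi_div_mul_sq hl]
    positivity

theorem rayleighQuot_sin_le (hl : 0 < l) (hd₂ : 0 ≤ d₂) (hτ1 : τ ≤ 1) (hJc : Continuous J)
    (hJ0 : ∀ x, 0 ≤ J x) (hJint : Integrable J) (hJ1 : ∫ x, J x = 1) :
    rayleighQuot d₂ τ cT J l (fun x => sin (π / l * x)) (fun x => π / l * cos (π / l * x)) ≤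
      d₂ * τ * (π / l) ^ 2 + 2 * d₂ * (1 - τ) - cT := by
  have hB := (neg_le_abs _).trans <|
    abs_integral_integral_kernel_mul_self_le hl.le hJc hJ0 hJint (ω := fun x => sin (π / l * x))
      (by fun_prop)
  rw [hJ1, one_mul, integral_sin_pi_div_mul_sq hl] at hB
  have hC : 0 < l / 2 := by positivity
  rw [rayleighQuot, integral_sin_pi_div_mul_sq hl, integral_deriv_sin_pi_div_mul_sq hl,
    sub_div, mul_div_assoc, mul_div_cancel_right₀ _ hC.ne']
  have : -(d₂ * (1 - τ) * (∫ x in (0:ℝ)..l, ∫ y in (0:ℝ)..l,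
      J (x - y) * sin (π / l * y) * sin (π / l * x)) / (l / 2)) ≤ d₂ * (1 - τ) := by
    rw [mul_div_assoc, ← mul_neg, ← neg_div]
    exact mul_le_of_le_one_right (mul_nonneg hd₂ (by linarith)) ((div_le_one hC).mpr hB)
  linarith

theorem mem_lowerBounds_rayleighValues (hl : 0 < l) (hd₂ : 0 ≤ d₂) (hτ : 0 ≤ τ)
    (hτ1 : τ ≤ 1) (hJc : Continuous J) (hJ0 : ∀ x, 0 ≤ J x) (hJint : Integrable J)
    (hJ1 : ∫ x, J x = 1) :
    d₂ * τ * π ^ 2 / l ^ 2 - cT ∈ lowerBounds (rayleighValues d₂ τ cT J l) := by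
  rintro r ⟨ω, ω', hω, hω', h0, hl0, hpos, rfl⟩
  have hωc : Continuous ω := continuous_iff_continuousAt.mpr fun x => (hω x).continuousAt
  have hA := wirtinger_inequality hl hω hω' h0 hl0
  have hB := le_of_abs_le <| abs_integral_integral_kernel_mul_self_le hl.le hJc hJ0 hJint hωc
  rw [hJ1, one_mul] at hB
  rw [div_pow] at hA
  have key : d₂ * τ * π ^ 2 / l ^ 2 - d₂ * (1 - τ) ≤
      (d₂ * τ * (∫ x in (0:ℝ)..l, ω' x ^ 2) -
        d₂ * (1 - τ) * ∫ x in (0:ℝ)..l, ∫ y in (0:ℝ)..l, J (x - y) * ω y * ω x) /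
        ∫ x in (0:ℝ)..l, ω x ^ 2 := by
    rw [le_div_iff₀ hpos]
    linear_combination mul_le_mul_of_nonneg_left hA (mul_nonneg hd₂ hτ) +
      mul_le_mul_of_nonneg_left hB (mul_nonneg hd₂ (sub_nonneg.mpr hτ1))
  rw [rayleighQuot]
  linarith

theorem le_lambdaOne (hl : 0 < l) (hd₂ : 0 ≤ d₂) (hτ : 0 ≤ τ) (hτ1 : τ ≤ 1)
    (hJc : Continuous J) (hJ0 : ∀ x, 0 ≤ J x) (hJint : Integrable J) (hJ1 : ∫ x, J x = 1) :
    d₂ * τ * π ^ 2 / l ^ 2 - cT ≤ lambdaOne d₂ τ cT J l :=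
  le_csInf ⟨_, rayleighQuot_sin_mem hl⟩
    (mem_lowerBounds_rayleighValues hl hd₂ hτ hτ1 hJc hJ0 hJint hJ1)

theorem lambdaOne_le (hl : 0 < l) (hd₂ : 0 ≤ d₂) (hτ : 0 ≤ τ) (hτ1 : τ ≤ 1)
    (hJc : Continuous J) (hJ0 : ∀ x, 0 ≤ J x) (hJint : Integrable J) (hJ1 : ∫ x, J x = 1) :
    lambdaOne d₂ τ cT J l ≤ d₂ * τ * (π / l) ^ 2 + 2 * d₂ * (1 - τ) - cT :=
  (csInf_le ⟨_, mem_lowerBounds_rayleighValues hl hd₂ hτ hτ1 hJc hJ0 hJint hJ1⟩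
    (rayleighQuot_sin_mem hl)).trans (rayleighQuot_sin_le hl hd₂ hτ1 hJc hJ0 hJint hJ1)

end Rayleigh

theorem tendsto_div_sq_nhdsGT_zero {c : ℝ} (hc : 0 < c) :
    Tendsto (fun l : ℝ => c / l ^ 2) (𝓝[>] 0) atTop := by
  simpa [div_eq_mul_inv, inv_pow] using
    ((tendsto_pow_atTop two_ne_zero).comp tendsto_inv_nhdsGT_zero).const_mul_atTop hc

theorem stmt_19_general (d₂ τ cT : ℝ) (J : ℝ → ℝ) (L : NNReal)
    (hd₂ : 0 < d₂) (hτ : 0 < τ) (hτ1 : τ ≤ 1)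
    (hJlip : LipschitzWith L J) (hJpos : ∀ x, 0 ≤ J x)
    (hJint : MeasureTheory.Integrable J)
    (hJ1 : ∫ x, J x = 1) :
    (∀ l > (0:ℝ), d₂ * τ * Real.pi ^ 2 / l ^ 2 - cT ≤ lambdaOne d₂ τ cT J l) ∧
    Tendsto (lambdaOne d₂ τ cT J) (nhdsWithin 0 (Ioi 0)) atTop ∧
    -cT ≤ liminf (lambdaOne d₂ τ cT J) atTop := by
  have hJc := hJlip.continuous
  have hlow (l : ℝ) (hl : 0 < l) :=
    le_lambdaOne (cT := cT) hl hd₂.le hτ.le hτ1 hJc hJpos hJint hJ1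
  refine ⟨hlow, ?_, ?_⟩
  · exact tendsto_atTop_mono' _ (eventually_nhdsWithin_of_forall hlow)
      (tendsto_atTop_add_const_right _ _ (tendsto_div_sq_nhdsGT_zero (by positivity)))
  · refine le_liminf_of_le (isCoboundedUnder_ge_of_eventually_le atTop
      (x := d₂ * τ * π ^ 2 + 2 * d₂ * (1 - τ) - cT) ?_) ?_
    · filter_upwards [eventually_ge_atTop 1] with l hl
      refine (lambdaOne_le (by positivity) hd₂.le hτ.le hτ1 hJc hJpos hJint hJ1).trans ?_
      gcongr
      exact div_le_self pi_pos.le hl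
    · filter_upwards [eventually_gt_atTop 0] with l hl
      have : 0 ≤ d₂ * τ * π ^ 2 / l ^ 2 := by positivity
      linarith [hlow l hl]

/-- Lemma 3.4(i), quantitative part: for the principal eigenvalue
`λ₁(l)` of `−(𝓛̃_{(0,l)} + c_T)`:
(i) `λ₁(l) ≥ d₂τπ²/l² − c_T`, hence `λ₁(l) → +∞` as `l → 0⁺`;
(ii) `liminf_{l→∞} λ₁(l) ≥ −c_T`. -/
theorem stmt_19 (d₂ τ cT : ℝ) (J : ℝ → ℝ) (L : NNReal)
    (hd₂ : 0 < d₂) (hτ : 0 < τ) (hτ1 : τ ≤ 1) (hcT : 0 < cT)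
    (hJlip : LipschitzWith L J) (hJpos : ∀ x, 0 ≤ J x)
    (hJsymm : ∀ x, J (-x) = J x) (hJint : MeasureTheory.Integrable J)
    (hJ1 : ∫ x, J x = 1) :
    (∀ l > (0:ℝ), d₂ * τ * Real.pi ^ 2 / l ^ 2 - cT ≤ lambdaOne d₂ τ cT J l) ∧
    Tendsto (lambdaOne d₂ τ cT J) (nhdsWithin 0 (Ioi 0)) atTop ∧
    -cT ≤ liminf (lambdaOne d₂ τ cT J) atTop :=
  stmt_19_general d₂ τ cT J L hd₂ hτ hτ1 hJlip hJpos hJint hJ1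
end
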